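/- In the two-person model, the program-level SCM with stateful PRNG and the intended scientific SCM induce the same marginal distribution of I2 within each fixed scenario (both give P(I2 = 1) = p2 when R1, R2, R3 are i.i.d. Unif(0,1)), even though the cross-scenario joint distributions of (I2^(0), I2^(1)) differ: under event-keyed noise I2^(0) = I2^(1) surely, while under stateful indexing I2^(0) and I2^(1) can disagree with positive probability when 0 < p1(1−VE) < p1 < 1 and 0 < p2 < 1. -/

import Mathlib

/-!
In each scenario the stateful program reads person 2's draw from `R 2` or from `R 1`, according
to an event of `R 0` alone; both candidates are independent of `R 0` and fall below `p2` with
the same probability, so the choice does not affect the law of `I2`. Across the two scenarios,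
however, the runs read different draws exactly when `p1 (1 - VE) ≤ R 0 < p1`, and on the further
event `R 1 < p2 ≤ R 2`, a box of positive probability, their outcomes differ.
-/

open MeasureTheory ProbabilityTheory Set

section Uniform

variable {Ω : Type*} [MeasurableSpace Ω] {μ : Measure Ω} {X : Ω → ℝ}

theorem measure_preimage_eq_volume_inter_Icc (hX : Measurable X)
    (hunif : μ.map X = volume.restrict (Icc 0 1)) {S : Set ℝ} (hS : MeasurableSet S) :
    μ (X ⁻¹' S) = volume (S ∩ Icc 0 1) := by
  rw [← Measure.map_apply hX hS, hunif, Measure.restrict_apply hS]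

theorem measure_preimage_Iio_of_map_eq_uniform (hX : Measurable X)
    (hunif : μ.map X = volume.restrict (Icc 0 1)) {c : ℝ} (hc : c ∈ Icc 0 1) :
    μ (X ⁻¹' Iio c) = ENNReal.ofReal c := by
  have hIco : Iio c ∩ Icc 0 1 = Ico 0 c := by
    ext x
    simp only [mem_inter_iff, mem_Iio, mem_Icc, mem_Ico]
    constructor
    · rintro ⟨hxc, hx0, -⟩
      exact ⟨hx0, hxc⟩
    · rintro ⟨hx0, hxc⟩
      exact ⟨hxc, hx0, hxc.le.trans hc.2⟩
  rw [measure_preimage_eq_volume_inter_Icc hX hunif measurableSet_Iio, hIco, Real.volume_Ico,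
    sub_zero]

theorem measure_preimage_pos_of_map_eq_uniform (hX : Measurable X)
    (hunif : μ.map X = volume.restrict (Icc 0 1)) {S : Set ℝ} (hS : MeasurableSet S)
    {a b : ℝ} (ha : 0 ≤ a) (hab : a < b) (hb : b ≤ 1) (hsub : Ioo a b ⊆ S) :
    0 < μ (X ⁻¹' S) := by
  have hIoo : Ioo a b ⊆ S ∩ Icc 0 1 :=
    subset_inter hsub (Ioo_subset_Icc_self.trans (Icc_subset_Icc ha hb))
  calc (0 : ENNReal) < volume (Ioo a b) := by simpa [Real.volume_Ioo] using hab
    _ ≤ volume (S ∩ Icc 0 1) := measure_mono hIoo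
    _ = μ (X ⁻¹' S) := (measure_preimage_eq_volume_inter_Icc hX hunif hS).symm

end Uniform

section Independence

variable {Ω : Type*} [MeasurableSpace Ω] {μ : Measure Ω}

theorem measure_ite_lt_of_indepFun [IsProbabilityMeasure μ] {U V W : Ω → ℝ} (hU : Measurable U)
    (hUV : IndepFun U V μ) (hUW : IndepFun U W μ) (t p : ℝ)
    (hVW : μ (W ⁻¹' Iio p) = μ (V ⁻¹' Iio p)) :
    μ {ω | (if U ω < t then W ω else V ω) < p} = μ (V ⁻¹' Iio p) := by
  have hs : MeasurableSet (U ⁻¹' Iio t) := hU measurableSet_Iio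
  have h_in : {ω | (if U ω < t then W ω else V ω) < p} ∩ U ⁻¹' Iio t
      = U ⁻¹' Iio t ∩ W ⁻¹' Iio p := by
    ext ω
    by_cases h : U ω < t <;> simp [h]
  have h_out : {ω | (if U ω < t then W ω else V ω) < p} \ U ⁻¹' Iio t
      = U ⁻¹' (Iio t)ᶜ ∩ V ⁻¹' Iio p := by
    ext ω
    by_cases h : U ω < t
    · simp [h]
    · simp [h, not_lt.mp h]
  rw [← measure_inter_add_sdiff _ hs, h_in, h_out,
    hUW.measure_inter_preimage_eq_mul _ _ measurableSet_Iio measurableSet_Iio,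
    hUV.measure_inter_preimage_eq_mul _ _ measurableSet_Iio.compl measurableSet_Iio, hVW,
    ← add_mul, preimage_compl, measure_add_measure_compl hs, measure_univ, one_mul]

theorem ProbabilityTheory.iIndepFun.measure_iInter_preimage_pos {ι : Type*} [Fintype ι]
    {β : ι → Type*} [∀ i, MeasurableSpace (β i)] {X : ∀ i, Ω → β i} (hX : iIndepFun X μ)
    {A : ∀ i, Set (β i)} (hA : ∀ i, MeasurableSet (A i)) (hpos : ∀ i, 0 < μ (X i ⁻¹' A i)) :
    0 < μ (⋂ i, X i ⁻¹' A i) := by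
  have hprod := hX.measure_inter_preimage_eq_mul Finset.univ (sets := A) fun i _ => hA i
  simp only [Finset.mem_univ, iInter_true] at hprod
  rw [hprod, pos_iff_ne_zero, Finset.prod_ne_zero_iff]
  exact fun i _ => (hpos i).ne'

theorem measure_iInter_preimage_Ico_Iio_Ici_pos {R : Fin 3 → Ω → ℝ}
    (hRmeas : ∀ i, Measurable (R i)) (hRindep : iIndepFun R μ)
    (hRunif : ∀ i, μ.map (R i) = volume.restrict (Icc 0 1))
    {a b p : ℝ} (ha : 0 ≤ a) (hab : a < b) (hb : b ≤ 1) (hp : p ∈ Ioo 0 1) :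
    0 < μ (⋂ i, R i ⁻¹' ![Ico a b, Iio p, Ici p] i) := by
  refine hRindep.measure_iInter_preimage_pos (fun i => by fin_cases i <;> measurability)
    fun i => ?_
  fin_cases i
  · exact measure_preimage_pos_of_map_eq_uniform (hRmeas 0) (hRunif 0) measurableSet_Ico
      ha hab hb Ioo_subset_Ico_self
  · exact measure_preimage_pos_of_map_eq_uniform (hRmeas 1) (hRunif 1) measurableSet_Iio
      le_rfl hp.1 hp.2.le Ioo_subset_Iio_self
  · exact measure_preimage_pos_of_map_eq_uniform (hRmeas 2) (hRunif 2) measurableSet_Ici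
      hp.1.le hp.2 le_rfl (Ioo_subset_Ioi_self.trans Ioi_subset_Ici_self)

end Independence

/-- In the two-person model with `R1, R2, R3` i.i.d. Unif(0,1): the stateful-PRNG
program and the event-keyed program both give `P(I2 = 1) = p2` within each fixed
scenario, but the cross-scenario couplings differ: under event-keyed noise
`I2⁽⁰⁾ = I2⁽¹⁾` surely, while under stateful draw indexing `I2⁽⁰⁾` and `I2⁽¹⁾`
disagree with positive probability. -/
theorem stmt16 {Ω : Type*} [MeasureSpace Ω] [IsProbabilityMeasure (ℙ : Measure Ω)]
    (R : Fin 3 → Ω → ℝ) (hRmeas : ∀ i, Measurable (R i))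
    (hRindep : iIndepFun R ℙ)
    (hRunif : ∀ i, Measure.map (R i) ℙ = volume.restrict (Set.Icc (0 : ℝ) 1))
    (p1 p2 VE : ℝ) (hp1 : p1 ∈ Set.Ioo (0 : ℝ) 1) (hp2 : p2 ∈ Set.Ioo (0 : ℝ) 1)
    (hVE : VE ∈ Set.Ioo (0 : ℝ) 1)
    -- stateful program: scenario A ∈ {0,1}; I1 = 1[R1 < p1(1 − A·VE)],
    -- I2 = 1[R_{2+I1} < p2] (draw index shifts with I1)
    (statefulI2 : ℕ → Ω → ℝ)
    (hstateful : ∀ A ω, statefulI2 A ω =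
      if (if R 0 ω < p1 * (1 - A * VE) then R 2 ω else R 1 ω) < p2 then 1 else 0)
    -- event-keyed program: person 2 has dedicated noise R3 in both scenarios
    (keyedI2 : ℕ → Ω → ℝ)
    (hkeyed : ∀ A ω, keyedI2 A ω = if R 2 ω < p2 then 1 else 0) :
    -- identical within-scenario marginals
    ℙ {ω | statefulI2 0 ω = 1} = ENNReal.ofReal p2 ∧
    ℙ {ω | statefulI2 1 ω = 1} = ENNReal.ofReal p2 ∧
    ℙ {ω | keyedI2 0 ω = 1} = ENNReal.ofReal p2 ∧
    ℙ {ω | keyedI2 1 ω = 1} = ENNReal.ofReal p2 ∧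
    -- event-keyed: perfect cross-scenario coupling
    (∀ ω, keyedI2 0 ω = keyedI2 1 ω) ∧
    -- stateful: disagreement with positive probability
    0 < ℙ {ω | statefulI2 0 ω ≠ statefulI2 1 ω} := by
  have hlt_p2 : ∀ i, ℙ (R i ⁻¹' Iio p2) = ENNReal.ofReal p2 := fun i =>
    measure_preimage_Iio_of_map_eq_uniform (hRmeas i) (hRunif i) ⟨hp2.1.le, hp2.2.le⟩
  have hstateful_marg (A : ℕ) : ℙ {ω | statefulI2 A ω = 1} = ENNReal.ofReal p2 := by
    simp only [hstateful, ite_eq_left_iff, zero_ne_one, imp_false, not_not]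
    rw [measure_ite_lt_of_indepFun (hRmeas 0) (hRindep.indepFun (by decide))
      (hRindep.indepFun (by decide)) _ _ ((hlt_p2 2).trans (hlt_p2 1).symm), hlt_p2 1]
  have hkeyed_marg (A : ℕ) : ℙ {ω | keyedI2 A ω = 1} = ENNReal.ofReal p2 := by
    simp only [hkeyed, ite_eq_left_iff, zero_ne_one, imp_false, not_not]
    exact hlt_p2 2
  have ha0 : 0 ≤ p1 * (1 - VE) := mul_nonneg hp1.1.le (by linarith [hVE.2])
  have hap1 : p1 * (1 - VE) < p1 := by nlinarith [hp1.1, hVE.1]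
  have hbox := measure_iInter_preimage_Ico_Iio_Ici_pos hRmeas hRindep hRunif ha0 hap1 hp1.2.le hp2
  have hdisagree : ⋂ i, R i ⁻¹' ![Ico (p1 * (1 - VE)) p1, Iio p2, Ici p2] i
      ⊆ {ω | statefulI2 0 ω ≠ statefulI2 1 ω} := by
    intro ω hω
    obtain ⟨hR0a, hR0p1⟩ : R 0 ω ∈ Ico (p1 * (1 - VE)) p1 := mem_iInter.1 hω 0
    have hR1 : R 1 ω < p2 := mem_iInter.1 hω 1
    have hR2 : p2 ≤ R 2 ω := mem_iInter.1 hω 2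
    have h0 : statefulI2 0 ω = 0 := by simp [hstateful, hR0p1, not_lt.mpr hR2]
    have h1 : statefulI2 1 ω = 1 := by simp [hstateful, not_lt.mpr hR0a, hR1]
    simp [h0, h1]
  exact ⟨hstateful_marg 0, hstateful_marg 1, hkeyed_marg 0, hkeyed_marg 1,
    fun ω => by rw [hkeyed, hkeyed], hbox.trans_le (measure_mono hdisagree)⟩
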